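/- In an enhanced Leibniz algebra, the Jacobiator of the antisymmetrized bracket is t of the anomaly: for all v₁, v₂, v₃ ∈ V, {v₁,{v₂,v₃}} − {{v₁,v₂},v₃} − {v₂,{v₁,v₃}} = t(γ(v₁,v₂,v₃)). -/

import Mathlib

/-!
Polarizing `[v,v] = t(v ∘ v)` shows that `[u,v] + [v,u]` lies in the image of `t`; combined
with `[t w, v] = 0` this computes `[v, t w]` as `t(v ∘ t w + t w ∘ v)`. Expanding the three
braces, the pure brackets cancel by the Leibniz identity and every remaining term is `t` of
a term of `γ`.
-/

/-- The antisymmetrized bracket `{v₁,v₂} := [v₁,v₂] − t(v₁ ∘ v₂)` of an enhanced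
Leibniz algebra. -/
def elaBrace {K V W : Type*} [Field K] [AddCommGroup V] [Module K V]
    [AddCommGroup W] [Module K W]
    (t : W →ₗ[K] V) (br : V →ₗ[K] V →ₗ[K] V) (c : V →ₗ[K] V →ₗ[K] W)
    (v₁ v₂ : V) : V :=
  br v₁ v₂ - t (c v₁ v₂)

/-- The anomaly `γ` of an enhanced Leibniz algebra. -/
def elaGamma {K V W : Type*} [Field K] [AddCommGroup V] [Module K V]
    [AddCommGroup W] [Module K W]
    (t : W →ₗ[K] V) (br : V →ₗ[K] V →ₗ[K] V) (c : V →ₗ[K] V →ₗ[K] W)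
    (v₁ v₂ v₃ : V) : W :=
  - c v₁ (br v₂ v₃) + c (br v₁ v₂) v₃ + c v₂ (br v₁ v₃)
    - c (t (c v₂ v₃)) v₁ - c (t (c v₁ v₂)) v₃ + c (t (c v₁ v₃)) v₂

section

variable {K V W : Type*} [CommSemiring K] [AddCommGroup V] [Module K V]
  [AddCommGroup W] [Module K W]
  {t : W →ₗ[K] V} {br : V →ₗ[K] V →ₗ[K] V} {c : V →ₗ[K] V →ₗ[K] W}

theorem br_add_br_swap_eq_t (axd : ∀ v : V, br v v = t (c v v)) (u v : V) :
    br u v + br v u = t (c u v + c v u) := by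
  have h := axd (u + v)
  simp only [map_add, LinearMap.add_apply, axd u, axd v] at h
  rw [map_add]
  linear_combination (norm := abel) h

theorem br_t_right_eq_t (axa : ∀ (w : W) (v : V), br (t w) v = 0)
    (axd : ∀ v : V, br v v = t (c v v)) (w : W) (v : V) :
    br v (t w) = t (c v (t w) + c (t w) v) := by
  simpa only [axa, add_zero] using br_add_br_swap_eq_t axd v (t w)

end

theorem ela_jacobiator_eq_t_gamma_general
    {K : Type*} [Field K]
    {V W : Type*} [AddCommGroup V] [Module K V] [AddCommGroup W] [Module K W]
    (t : W →ₗ[K] V) (br : V →ₗ[K] V →ₗ[K] V) (c : V →ₗ[K] V →ₗ[K] W)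
    (leib : ∀ v₁ v₂ v₃ : V, br v₁ (br v₂ v₃) = br (br v₁ v₂) v₃ + br v₂ (br v₁ v₃))
    (axa : ∀ (w : W) (v : V), br (t w) v = 0)
    (axd : ∀ v : V, br v v = t (c v v)) :
    ∀ v₁ v₂ v₃ : V,
      elaBrace t br c v₁ (elaBrace t br c v₂ v₃)
        - elaBrace t br c (elaBrace t br c v₁ v₂) v₃
        - elaBrace t br c v₂ (elaBrace t br c v₁ v₃)
      = t (elaGamma t br c v₁ v₂ v₃) := by
  intro v₁ v₂ v₃
  simp only [elaBrace, elaGamma, map_sub, map_add, map_neg, LinearMap.sub_apply,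
    axa, br_t_right_eq_t axa axd, leib v₁ v₂ v₃]
  abel

/-- In an enhanced Leibniz algebra, the Jacobiator of the antisymmetrized bracket
equals `t` of the anomaly. -/
theorem ela_jacobiator_eq_t_gamma
    {K : Type*} [Field K] (h2 : (2 : K) ≠ 0)
    {V W : Type*} [AddCommGroup V] [Module K V] [AddCommGroup W] [Module K W]
    (t : W →ₗ[K] V) (br : V →ₗ[K] V →ₗ[K] V) (c : V →ₗ[K] V →ₗ[K] W)
    (leib : ∀ v₁ v₂ v₃ : V, br v₁ (br v₂ v₃) = br (br v₁ v₂) v₃ + br v₂ (br v₁ v₃))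
    (axa : ∀ (w : W) (v : V), br (t w) v = 0)
    (axb : ∀ w : W, c (t w) (t w) = 0)
    (axc : ∀ u v : V, (2 : K)⁻¹ • (c u (br v v) + c (br v v) u)
            = (2 : K)⁻¹ • (c v (br u v) + c (br u v) v))
    (axd : ∀ v : V, br v v = t (c v v)) :
    ∀ v₁ v₂ v₃ : V,
      elaBrace t br c v₁ (elaBrace t br c v₂ v₃)
        - elaBrace t br c (elaBrace t br c v₁ v₂) v₃
        - elaBrace t br c v₂ (elaBrace t br c v₁ v₃)
      = t (elaGamma t br c v₁ v₂ v₃) :=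
  ela_jacobiator_eq_t_gamma_general t br c leib axa axd
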